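/- arXiv:1706.01665 — 3 statements merged into one kernel-verified Lean document; each statement's English description precedes it below -/
import Mathlib

section
/- Strict hypervolume improvement at non-dominated points: let B ⊆ {y ∈ ℝ^m : r ≤ y} be a finite set and let y ∈ ℝ^m satisfy r_i < y_i for every coordinate i. If y ∉ A[B], then the Lebesgue measure of A[B ∪ {y}] is strictly greater than the Lebesgue measure of A[B]. -/
/-! The new point `y` contributes the box `[r, y]`; since `A[B]` is closed and misses `y`, a
neighbourhood of the corner `y` inside that box is new, and it has positive volume because `y`
lies in the closure of the open box `∏ (r i, y i)`. -/

open MeasureTheory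

/-- The attained set `A[B]` relative to a reference point `r`:
the points of the cone `[r, ∞)` dominated by some element of `B`
(componentwise order on `ℝ^m`). -/
def attained {m : ℕ} (r : Fin m → ℝ) (B : Set (Fin m → ℝ)) : Set (Fin m → ℝ) :=
  {y | r ≤ y ∧ ∃ y' ∈ B, y ≤ y'}

section Attained

variable {m : ℕ} (r : Fin m → ℝ)

lemma attained_eq_biUnion (B : Set (Fin m → ℝ)) : attained r B = ⋃ b ∈ B, Set.Icc r b := by
  ext z
  simp [attained, and_comm]

lemma attained_union (B C : Set (Fin m → ℝ)) :
    attained r (B ∪ C) = attained r B ∪ attained r C := by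
  simp only [attained_eq_biUnion, Set.biUnion_union]

lemma attained_singleton (y : Fin m → ℝ) : attained r {y} = Set.Icc r y := by
  simp [attained_eq_biUnion]

variable {r} {B : Set (Fin m → ℝ)}

lemma Set.Finite.isClosed_attained (hB : B.Finite) : IsClosed (attained r B) := by
  rw [attained_eq_biUnion]
  exact hB.isClosed_biUnion fun _ _ => isClosed_Icc

lemma Set.Finite.measure_attained_lt_top (hB : B.Finite) (μ : Measure (Fin m → ℝ))
    [IsFiniteMeasureOnCompacts μ] : μ (attained r B) < ⊤ := by
  rw [attained_eq_biUnion]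
  exact measure_biUnion_lt_top hB fun _ _ => isCompact_Icc.measure_lt_top

end Attained

lemma MeasureTheory.measure_lt_measure_union {α : Type*} [MeasurableSpace α] {μ : Measure α}
    {s t : Set α} (hs : MeasurableSet s) (hμs : μ s ≠ ⊤) (hts : 0 < μ (t \ s)) :
    μ s < μ (s ∪ t) := by
  rw [← Set.union_sdiff_self, measure_union' Set.disjoint_sdiff_right hs]
  exact ENNReal.lt_add_right hμs hts.ne'

lemma measure_Icc_inter_pos_of_mem_nhds {ι : Type*} [Finite ι] {μ : Measure (ι → ℝ)}
    [μ.IsOpenPosMeasure] {a b : ι → ℝ} (hab : ∀ i, a i < b i) {U : Set (ι → ℝ)}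
    (hU : U ∈ nhds b) : 0 < μ (Set.Icc a b ∩ U) := by
  have hb : b ∈ closure (Set.univ.pi fun i => Set.Ioo (a i) (b i)) := by
    rw [closure_pi_set]
    intro i _
    simp only [closure_Ioo (hab i).ne, Set.right_mem_Icc, (hab i).le]
  obtain ⟨z, hzU, hz⟩ := mem_closure_iff_nhds.mp hb (interior U) (interior_mem_nhds.mpr hU)
  have hopen : IsOpen ((Set.univ.pi fun i => Set.Ioo (a i) (b i)) ∩ interior U) :=
    (isOpen_set_pi Set.finite_univ fun _ _ => isOpen_Ioo).inter isOpen_interior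
  refine (hopen.measure_pos μ ⟨z, hz, hzU⟩).trans_le (measure_mono ?_)
  rintro x ⟨hx, hxU⟩
  exact ⟨⟨fun i => (hx i trivial).1.le, fun i => (hx i trivial).2.le⟩, interior_subset hxU⟩

theorem hypervolume_strict_improvement_general {m : ℕ} (r : Fin m → ℝ)
    (B : Set (Fin m → ℝ)) (hBfin : B.Finite)
    (y : Fin m → ℝ) (hy : ∀ i, r i < y i) (hnd : y ∉ attained r B) :
    volume (attained r B) < volume (attained r (B ∪ {y})) := by
  rw [attained_union, attained_singleton]
  have hclosed := hBfin.isClosed_attained (r := r)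
  refine measure_lt_measure_union hclosed.measurableSet
    (hBfin.measure_attained_lt_top volume).ne ?_
  exact measure_Icc_inter_pos_of_mem_nhds hy (hclosed.isOpen_compl.mem_nhds hnd)

/-- Strict hypervolume improvement at non-dominated points: if `B` is a finite
subset of the cone `[r, ∞)`, `y` satisfies `r i < y i` in every coordinate and
`y ∉ A[B]`, then the Lebesgue measure of `A[B ∪ {y}]` is strictly greater than
that of `A[B]`. -/
theorem hypervolume_strict_improvement {m : ℕ} (hm : 1 ≤ m) (r : Fin m → ℝ)
    (B : Set (Fin m → ℝ)) (hBfin : B.Finite)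
    (hB : B ⊆ {y : Fin m → ℝ | r ≤ y})
    (y : Fin m → ℝ) (hy : ∀ i, r i < y i) (hnd : y ∉ attained r B) :
    volume (attained r B) < volume (attained r (B ∪ {y})) :=
  hypervolume_strict_improvement_general r B hBfin y hy hnd
end

section
/- Antichains in ℝ^m are Lebesgue-null: if S ⊆ ℝ^m (m ≥ 1) is such that for any two distinct points y, y' ∈ S neither y ≤ y' nor y' ≤ y holds in the componentwise order, then S has Lebesgue outer measure zero (S is a null set). -/
open MeasureTheory

/-- The linear change of coordinates `x ↦ (∑ x, x₁ - x₀, …, xₙ - x₀)`. -/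
noncomputable def diagT (n : ℕ) : (Fin (n+1) → ℝ) →ₗ[ℝ] (Fin (n+1) → ℝ) :=
  LinearMap.pi (fun i => Fin.cases (motive := fun _ => (Fin (n+1) → ℝ) →ₗ[ℝ] ℝ)
    (∑ k : Fin (n+1), LinearMap.proj k)
    (fun j => (LinearMap.proj j.succ : (Fin (n+1) → ℝ) →ₗ[ℝ] ℝ) - LinearMap.proj (0 : Fin (n+1))) i)

/-- Inverse of `diagT`. -/
noncomputable def diagTinv (n : ℕ) : (Fin (n+1) → ℝ) →ₗ[ℝ] (Fin (n+1) → ℝ) :=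
  LinearMap.pi (fun i => Fin.cases (motive := fun _ => (Fin (n+1) → ℝ) →ₗ[ℝ] ℝ)
    ((((n : ℝ)+1)⁻¹) • (LinearMap.proj (0 : Fin (n+1)) - ∑ j : Fin n, LinearMap.proj j.succ))
    (fun j => (LinearMap.proj j.succ : (Fin (n+1) → ℝ) →ₗ[ℝ] ℝ) +
      (((n : ℝ)+1)⁻¹) • (LinearMap.proj (0 : Fin (n+1)) - ∑ j : Fin n, LinearMap.proj j.succ)) i)

@[simp] lemma diagT_apply_zero (n : ℕ) (x : Fin (n+1) → ℝ) :
    diagT n x 0 = ∑ k, x k := by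
  simp [diagT]

@[simp] lemma diagT_apply_succ (n : ℕ) (x : Fin (n+1) → ℝ) (j : Fin n) :
    diagT n x j.succ = x j.succ - x 0 := by
  simp [diagT]

@[simp] lemma diagTinv_apply_zero (n : ℕ) (y : Fin (n+1) → ℝ) :
    diagTinv n y 0 = (((n : ℝ)+1)⁻¹) * (y 0 - ∑ j : Fin n, y j.succ) := by
  simp [diagTinv, smul_eq_mul]

@[simp] lemma diagTinv_apply_succ (n : ℕ) (y : Fin (n+1) → ℝ) (j : Fin n) :
    diagTinv n y j.succ = y j.succ + (((n : ℝ)+1)⁻¹) * (y 0 - ∑ j : Fin n, y j.succ) := by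
  simp [diagTinv, smul_eq_mul]

lemma diagT_comp_diagTinv (n : ℕ) : (diagT n).comp (diagTinv n) = LinearMap.id := by
  have hn : ((n : ℝ) + 1) ≠ 0 := by positivity
  apply LinearMap.ext
  intro y
  funext i
  induction i using Fin.cases with
  | zero =>
    simp only [LinearMap.comp_apply, LinearMap.id_apply, diagT_apply_zero, Fin.sum_univ_succ,
      diagTinv_apply_zero, diagTinv_apply_succ, Finset.sum_add_distrib, Finset.sum_const,
      Finset.card_univ, Fintype.card_fin, nsmul_eq_mul]
    field_simp
    ring
  | succ j =>
    simp only [LinearMap.comp_apply, LinearMap.id_apply, diagT_apply_succ,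
      diagTinv_apply_zero, diagTinv_apply_succ]
    ring

lemma diagTinv_comp_diagT (n : ℕ) : (diagTinv n).comp (diagT n) = LinearMap.id := by
  have hn : ((n : ℝ) + 1) ≠ 0 := by positivity
  apply LinearMap.ext
  intro x
  funext i
  induction i using Fin.cases with
  | zero =>
    simp only [LinearMap.comp_apply, LinearMap.id_apply, diagTinv_apply_zero, diagT_apply_zero,
      diagT_apply_succ, Fin.sum_univ_succ, Finset.sum_sub_distrib, Finset.sum_const,
      Finset.card_univ, Fintype.card_fin, nsmul_eq_mul]
    field_simp
    ring
  | succ j =>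
    simp only [LinearMap.comp_apply, LinearMap.id_apply, diagTinv_apply_succ, diagT_apply_zero,
      diagT_apply_succ, Fin.sum_univ_succ, Finset.sum_sub_distrib, Finset.sum_const,
      Finset.card_univ, Fintype.card_fin, nsmul_eq_mul]
    field_simp
    ring

/-- The linear equivalence given by `diagT`. -/
noncomputable def diagE (n : ℕ) : (Fin (n+1) → ℝ) ≃ₗ[ℝ] (Fin (n+1) → ℝ) :=
  LinearEquiv.ofLinear (diagT n) (diagTinv n) (diagT_comp_diagTinv n) (diagTinv_comp_diagT n)

/-- Antichains in `ℝ^m` (`m ≥ 1`) are Lebesgue-null: if no two distinct points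
of `S` are comparable in the componentwise order, then `S` is a null set. -/
theorem antichain_volume_zero {m : ℕ} (hm : 1 ≤ m) (S : Set (Fin m → ℝ))
    (hS : ∀ y ∈ S, ∀ y' ∈ S, y ≠ y' → ¬ y ≤ y' ∧ ¬ y' ≤ y) :
    volume S = 0 := by
  classical
  obtain ⟨n, rfl⟩ : ∃ n, m = n + 1 := ⟨m - 1, (Nat.succ_pred_eq_of_pos hm).symm⟩
  set proj : (Fin (n+1) → ℝ) → (Fin n → ℝ) := fun x j => x j.succ - x 0 with hprojdef
  -- key Lipschitz estimate on the antichain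
  have main : ∀ x ∈ S, ∀ x' ∈ S,
      (∑ i, x i) - ∑ i, x' i ≤ (2*((n : ℝ)+1)) * dist (proj x) (proj x') := by
    intro z hz z' hz'
    by_contra hcon
    push_neg at hcon
    set D := dist (proj z) (proj z') with hD
    have hD0 : 0 ≤ D := dist_nonneg
    have hδ : ∀ j : Fin n, |(z j.succ - z 0) - (z' j.succ - z' 0)| ≤ D := by
      intro j
      have h2 : z j.succ - z 0 - (z' j.succ - z' 0) = proj z j - proj z' j := by
        simp [hprojdef]
      rw [h2, ← Real.dist_eq]
      exact dist_le_pi_dist (proj z) (proj z') j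
    have hsum : (∑ i, z i) - (∑ i, z' i)
        = ((n : ℝ)+1) * (z 0 - z' 0) + ∑ j : Fin n, ((z j.succ - z 0) - (z' j.succ - z' 0)) := by
      simp only [Fin.sum_univ_succ, Finset.sum_sub_distrib, Finset.sum_const,
        Finset.card_univ, Fintype.card_fin, nsmul_eq_mul]
      ring
    have hsd : |∑ j : Fin n, ((z j.succ - z 0) - (z' j.succ - z' 0))| ≤ (n : ℝ) * D := by
      calc |∑ j : Fin n, ((z j.succ - z 0) - (z' j.succ - z' 0))|
          ≤ ∑ j : Fin n, |(z j.succ - z 0) - (z' j.succ - z' 0)| :=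
            Finset.abs_sum_le_sum_abs _ _
        _ ≤ ∑ _j : Fin n, D := Finset.sum_le_sum fun j _ => hδ j
        _ = (n : ℝ) * D := by simp [mul_comm]
    have h0 : D < z 0 - z' 0 := by
      have habs := abs_le.1 hsd
      nlinarith [hcon]
    have hlt : ∀ i, z' i < z i := by
      intro i
      induction i using Fin.cases with
      | zero => linarith [h0, hD0]
      | succ j =>
        have := (abs_le.1 (hδ j)).1
        nlinarith
    have hne : z ≠ z' := by
      intro h
      exact absurd (congrFun h 0) (hlt 0).ne'
    exact (hS z hz z' hz' hne).2 (fun i => (hlt i).le)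
  have key : ∀ x ∈ S, ∀ x' ∈ S,
      |(∑ i, x i) - ∑ i, x' i| ≤ (2*((n : ℝ)+1)) * dist (proj x) (proj x') := by
    intro x hx x' hx'
    rw [abs_le]
    constructor
    · have := main x' hx' x hx
      rw [dist_comm] at this
      linarith
    · exact main x hx x' hx'
  -- the function giving the sum of coordinates as a function of the projection
  set f : (Fin n → ℝ) → ℝ := fun v =>
    if h : v ∈ proj '' S then ∑ i, h.choose i else 0 with hfdef
  have hfspec : ∀ v (h : v ∈ proj '' S), h.choose ∈ S ∧ proj h.choose = v := fun v h => h.choose_spec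
  set K : NNReal := ⟨2*((n : ℝ)+1), by positivity⟩ with hKdef
  have hKcoe : (K : ℝ) = 2*((n : ℝ)+1) := rfl
  have hLip : LipschitzOnWith K f (proj '' S) := by
    rw [lipschitzOnWith_iff_dist_le_mul]
    intro v hv v' hv'
    rw [hfdef]
    simp only [dif_pos hv, dif_pos hv']
    obtain ⟨hx, hpx⟩ := hfspec v hv
    obtain ⟨hx', hpx'⟩ := hfspec v' hv'
    rw [Real.dist_eq, hKcoe]
    have := key _ hx _ hx'
    rwa [hpx, hpx'] at this
  obtain ⟨g, hg, hfg⟩ := hLip.extend_real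
  -- S is contained in the "graph" set N
  have hSN : S ⊆ {x : Fin (n+1) → ℝ | ∑ i, x i = g (proj x)} := by
    intro x hx
    have hmem : proj x ∈ proj '' S := ⟨x, hx, rfl⟩
    have h1 : g (proj x) = f (proj x) := (hfg hmem).symm
    obtain ⟨hxc, hpxc⟩ := hfspec (proj x) hmem
    have h2 : f (proj x) = ∑ i, hmem.choose i := by rw [hfdef]; simp only [dif_pos hmem]
    have h3 : |(∑ i, x i) - ∑ i, hmem.choose i| ≤ (2*((n : ℝ)+1)) * dist (proj x) (proj hmem.choose) := key _ hx _ hxc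
    rw [hpxc, dist_self, mul_zero, abs_nonpos_iff, sub_eq_zero] at h3
    simp only [Set.mem_setOf_eq]
    rw [h1, h2, h3]
  -- the graph set in product form
  set G : Set (ℝ × (Fin n → ℝ)) := {p | p.1 = g p.2} with hGdef
  have hGmeas : MeasurableSet G :=
    measurableSet_eq_fun measurable_fst ((hg.continuous.measurable).comp measurable_snd)
  have hGnull : volume G = 0 := by
    rw [MeasureTheory.Measure.volume_eq_prod, Measure.prod_apply_symm hGmeas]
    have : ∀ y : Fin n → ℝ, volume ((fun x : ℝ => (x, y)) ⁻¹' G) = 0 := by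
      intro y
      have : ((fun x : ℝ => (x, y)) ⁻¹' G) = {g y} := by
        ext t; simp [hGdef]
      rw [this]
      exact measure_singleton _
    simp [this]
  -- transfer to the graph set in `Fin (n+1) → ℝ`
  set e : (Fin (n+1) → ℝ) ≃ᵐ ℝ × (Fin n → ℝ) :=
    MeasurableEquiv.piFinSuccAbove (fun _ => ℝ) 0 with hedef
  have hemp : MeasurePreserving e volume volume :=
    volume_preserving_piFinSuccAbove (fun _ => ℝ) 0
  set N' : Set (Fin (n+1) → ℝ) := {x | x 0 = g (fun j => x j.succ)} with hN'def
  have hN'eq : N' = e ⁻¹' G := by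
    ext x
    simp only [hN'def, hGdef, hedef, MeasurableEquiv.piFinSuccAbove, Fin.succAbove, Fin.tail,
      Set.mem_setOf_eq, Set.mem_preimage]
    exact Iff.rfl
  have hN'null : volume N' = 0 := by
    rw [hN'eq, hemp.measure_preimage_equiv]
    exact hGnull
  -- pull back through the linear change of coordinates
  have hsub : S ⊆ ⇑(diagE n) ⁻¹' N' := by
    intro x hx
    have := hSN hx
    simp only [Set.mem_setOf_eq] at this
    simp only [Set.mem_preimage, hN'def, Set.mem_setOf_eq]
    show diagE n x 0 = g (fun j => diagE n x j.succ)
    have h0 : diagE n x 0 = ∑ i, x i := diagT_apply_zero n x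
    have hsucc : (fun j => diagE n x j.succ) = proj x := by
      funext j
      exact diagT_apply_succ n x j
    rw [h0, hsucc]
    exact this
  have himg : ⇑(diagE n) ⁻¹' N' = ⇑((diagE n).symm) '' N' := by
    ext x
    constructor
    · intro hx
      exact ⟨diagE n x, hx, (diagE n).symm_apply_apply x⟩
    · rintro ⟨y, hy, rfl⟩
      simpa [(diagE n).apply_symm_apply] using hy
  have hNnull : volume (⇑(diagE n) ⁻¹' N') = 0 := by
    rw [himg]
    have := Measure.addHaar_image_linearMap (volume : Measure (Fin (n+1) → ℝ))
      ((diagE n).symm : (Fin (n+1) → ℝ) →ₗ[ℝ] (Fin (n+1) → ℝ)) N'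
    rw [show ⇑((diagE n).symm : (Fin (n+1) → ℝ) →ₗ[ℝ] (Fin (n+1) → ℝ)) = ⇑((diagE n).symm) from rfl] at this
    rw [this, hN'null, mul_zero]
  exact measure_mono_null hsub hNnull
end

section
/- The Pareto frontier has Lebesgue measure zero: for any set B ⊆ ℝ^m (m ≥ 1), the set P[B] of maximal elements of B with respect to the componentwise order is a Lebesgue-null subset of ℝ^m. -/
open MeasureTheory

/-- The Pareto frontier has Lebesgue measure zero: for any `B ⊆ ℝ^m` (`m ≥ 1`),
the set of maximal elements of `B` in the componentwise order is null. -/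
theorem pareto_volume_zero {m : ℕ} (hm : 1 ≤ m) (B : Set (Fin m → ℝ)) :
    volume {y : Fin m → ℝ | y ∈ B ∧ ∀ y' ∈ B, y ≤ y' → y' = y} = 0 := by
  have : Nonempty (Fin m) := ⟨⟨0, hm⟩⟩
  apply IsAntichain.volume_eq_zero
  intro y hy y' hy' hne hle
  exact hne (hy.2 y' hy'.1 hle).symm
end
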